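/- arXiv:1805.09753 — 6 statements merged into one kernel-verified Lean document; each statement's English description precedes it below -/
import Mathlib

section
/- Let λ(d) = t_min(d)/t_max(d) = 1/(d−1), and let N_λ be the affine map N_λ(x) = λ x + (1−λ) π, where π is the uniform vector. Then for every orthogonal transformation O of ℝ^d fixing the all-ones vector, and every x in the probability simplex Δ^(d), the point N_λ(O(x)) lies in Δ^(d). -/
open scoped RealInnerProductSpace

/-- The uniform vector `π = (1/d,…,1/d)` in Euclidean space `ℝ^d`. -/
noncomputable def unifVec (d : ℕ) : EuclideanSpace ℝ (Fin d) := WithLp.toLp 2 (fun _ => (d : ℝ)⁻¹)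

/-- The all-ones vector in Euclidean space `ℝ^d`. -/
def onesVec (d : ℕ) : EuclideanSpace ℝ (Fin d) := WithLp.toLp 2 (fun _ => (1 : ℝ))

/-! `y = O x` still has coordinate sum `1` (it is `⟪y, 𝟙⟫`) and `‖y‖ = ‖x‖ ≤ 1`.
Cauchy–Schwarz on the other `d - 1` coordinates gives `(1 - yᵢ)² ≤ (d - 1)(1 - yᵢ²)`,
i.e. `yᵢ ≥ -(d - 2)/d`, which is exactly the bound making `λ yᵢ + (1 - λ)/d ≥ 0` for `λ = 1/(d - 1)`. -/

open Finset

section CoordinateBounds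

variable {ι : Type*} [Fintype ι]

theorem sum_sq_le_one_of_nonneg_of_sum_eq_one {y : ι → ℝ} (hy0 : ∀ i, 0 ≤ y i)
    (hy1 : ∑ i, y i = 1) : ∑ i, y i ^ 2 ≤ 1 := by
  have hle : ∀ i, y i ≤ 1 := fun i =>
    hy1 ▸ single_le_sum (fun j _ => hy0 j) (mem_univ i)
  calc ∑ i, y i ^ 2 ≤ ∑ i, y i :=
        sum_le_sum fun i _ => by nlinarith [hy0 i, hle i]
    _ = 1 := hy1

theorem two_sub_card_le_card_mul_of_sum_eq_one_of_sum_sq_le_one {y : ι → ℝ}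
    (hy1 : ∑ j, y j = 1) (hy2 : ∑ j, y j ^ 2 ≤ 1) (i : ι) :
    2 - (Fintype.card ι : ℝ) ≤ Fintype.card ι * y i := by
  classical
  set n : ℝ := (Fintype.card ι : ℝ)
  have hrest : ∑ j ∈ univ.erase i, y j = 1 - y i := by
    rw [← hy1, ← add_sum_erase _ _ (mem_univ i)]; ring
  have hrest2 : ∑ j ∈ univ.erase i, y j ^ 2 ≤ 1 - y i ^ 2 := by
    rw [← add_sum_erase _ _ (mem_univ i)] at hy2; linarith
  have hcard : (#(univ.erase i) : ℝ) = n - 1 := by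
    rw [cast_card_erase_of_mem (mem_univ i), card_univ]
  have hcs := sq_sum_le_card_mul_sum_sq (s := univ.erase i) (f := y)
  rw [hrest, hcard] at hcs
  have hn : 1 ≤ n := Nat.one_le_cast.mpr (Fintype.card_pos_iff.mpr ⟨i⟩)
  have hyi : y i ≤ 1 := by nlinarith [sq_nonneg (y i - 1)]
  -- `(1 - yᵢ)² ≤ (n - 1)(1 - yᵢ)(1 + yᵢ)`; cancel the factor `1 - yᵢ ≥ 0` unless it vanishes.
  rcases hyi.lt_or_eq with hlt | heq
  · nlinarith [mul_le_mul_of_nonneg_left hrest2 (sub_nonneg.mpr hn)]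
  · rw [heq]; linarith

end CoordinateBounds

theorem inner_onesVec {d : ℕ} (y : EuclideanSpace ℝ (Fin d)) : ⟪y, onesVec d⟫ = ∑ i, y i := by
  simp [PiLp.inner_apply, onesVec]

theorem sum_apply_eq_of_map_onesVec {d : ℕ}
    (O : EuclideanSpace ℝ (Fin d) →ₗᵢ[ℝ] EuclideanSpace ℝ (Fin d))
    (hO : O (onesVec d) = onesVec d) (y : EuclideanSpace ℝ (Fin d)) :
    ∑ i, O y i = ∑ i, y i := by
  have h := O.inner_map_map y (onesVec d)
  rwa [hO, inner_onesVec, inner_onesVec] at h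

theorem sum_sq_apply_eq_of_linearIsometry {ι : Type*} [Fintype ι]
    (O : EuclideanSpace ℝ ι →ₗᵢ[ℝ] EuclideanSpace ℝ ι) (y : EuclideanSpace ℝ ι) :
    ∑ i, O y i ^ 2 = ∑ i, y i ^ 2 := by
  have h := congrArg (· ^ 2) (O.norm_map y)
  simpa only [EuclideanSpace.norm_sq_eq, Real.norm_eq_abs, sq_abs] using h

/-- With `λ(d) = t_min(d)/t_max(d) = 1/(d−1)` and `N_λ(x) = λ x + (1−λ) π` (with `π` the
uniform vector), for every orthogonal transformation `O` of `ℝ^d` fixing the all-ones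
vector and every `x` in the probability simplex, `N_λ(O(x))` lies in the simplex. -/
theorem stmt_3 (d : ℕ) (hd : 2 ≤ d)
    (O : EuclideanSpace ℝ (Fin d) ≃ₗᵢ[ℝ] EuclideanSpace ℝ (Fin d))
    (hO : O (onesVec d) = onesVec d)
    (x : EuclideanSpace ℝ (Fin d)) (hx0 : ∀ i, 0 ≤ x i) (hx1 : ∑ i, x i = 1) :
    (∀ i, 0 ≤ ((((d : ℝ) - 1)⁻¹) • (O x)
        + (1 - ((d : ℝ) - 1)⁻¹) • unifVec d) i)
    ∧ ∑ i, ((((d : ℝ) - 1)⁻¹) • (O x)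
        + (1 - ((d : ℝ) - 1)⁻¹) • unifVec d) i = 1 := by
  have hd' : (2 : ℝ) ≤ d := by exact_mod_cast hd
  have hd0 : (d : ℝ) ≠ 0 := by positivity
  have hd1 : (d : ℝ) - 1 ≠ 0 := by linarith
  have hsum : ∑ i, O x i = 1 :=
    (sum_apply_eq_of_map_onesVec O.toLinearIsometry hO x).trans hx1
  have hsq : ∑ i, O x i ^ 2 ≤ 1 :=
    (sum_sq_apply_eq_of_linearIsometry O.toLinearIsometry x).trans_le
      (sum_sq_le_one_of_nonneg_of_sum_eq_one hx0 hx1)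
  have hcoord : ∀ i, ((((d : ℝ) - 1)⁻¹) • (O x) + (1 - ((d : ℝ) - 1)⁻¹) • unifVec d) i
      = (O x i * d + (d - 2)) / ((d - 1) * d) := by
    intro i
    simp only [PiLp.add_apply, PiLp.smul_apply, smul_eq_mul, unifVec]
    field_simp
    ring
  refine ⟨fun i => ?_, ?_⟩
  · have hi := two_sub_card_le_card_mul_of_sum_eq_one_of_sum_sq_le_one hsum hsq i
    rw [Fintype.card_fin] at hi
    rw [hcoord]
    apply div_nonneg <;> nlinarith
  · simp only [hcoord, ← sum_div, sum_add_distrib, ← sum_mul, hsum, sum_const, card_univ,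
      Fintype.card_fin, nsmul_eq_mul]
    field_simp
    ring
end

section
/- Let A, B ⊂ Δ^(d) be disjoint compact convex subsets of the probability simplex of dimension d ≥ 2 (so Δ^(d) ⊂ ℝ^{d+1}). Then there exist affine maps Q_i : ℝ^{d+1−i} → ℝ^{d−i} (i = 1,…,d−2) mapping Δ^{(d+1−i)} into Δ^{(d−i)} such that the images Â = (Q_{d−2} ∘ … ∘ Q_1)(A) and B̂ = (Q_{d−2} ∘ … ∘ Q_1)(B), which lie in Δ^(2), remain disjoint. -/
/-!
Strictly separate `A` from `B` by a linear functional. On the simplex the functional may be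
shifted by a constant and rescaled, so it is realised by weights `w ∈ [0, 1]^(d+1)`. The first
map sends `x` to `(w ⬝ᵥ x, (1 - w) ⬝ᵥ x, 0, …, 0)`, a stochastic matrix; every later map keeps
coordinate `0` and lumps the remaining mass into coordinate `1`. Coordinate `0` of the final
image is then `w ⬝ᵥ x`, which still separates the images of `A` and `B`.
-/

/-- The probability simplex on `n` coordinates: `Δ^(k)` of the paper is `probSimplex (k+1)`. -/
def probSimplex (n : ℕ) : Set (Fin n → ℝ) :=
  {x | (∀ i, 0 ≤ x i) ∧ ∑ i, x i = 1}

/-- Composition of `s` dimension-reducing affine maps, starting from dimension `n`: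
`chainQ Q n s` maps `ℝ^n` to `ℝ^(n-s)` by applying `Q n`, then `Q (n-1)`, …  (Here
`Q m : ℝ^m → ℝ^(m-1)`.) -/
def chainQ (Q : ∀ m : ℕ, (Fin m → ℝ) →ᵃ[ℝ] (Fin (m - 1) → ℝ)) :
    (n s : ℕ) → (Fin n → ℝ) → (Fin (n - s) → ℝ)
  | _, 0 => id
  | n, s + 1 => fun x => Q (n - s) (chainQ Q n s x)

open Matrix

theorem mulVec_mem_probSimplex {k n : ℕ} {M : Matrix (Fin k) (Fin n) ℝ} (hM : ∀ i j, 0 ≤ M i j)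
    (hcol : 1 ᵥ* M = 1) {x : Fin n → ℝ} (hx : x ∈ probSimplex n) :
    M *ᵥ x ∈ probSimplex k := by
  refine ⟨fun i => show 0 ≤ ∑ j, M i j * x j from
    Finset.sum_nonneg fun j _ => mul_nonneg (hM i j) (hx.1 j), ?_⟩
  calc ∑ i, (M *ᵥ x) i = 1 ⬝ᵥ (M *ᵥ x) := (one_dotProduct _).symm
    _ = ∑ j, x j := by rw [dotProduct_mulVec, hcol, one_dotProduct]
    _ = 1 := hx.2

theorem exists_dotProduct_lt_of_disjoint {n : ℕ} {A B : Set (Fin n → ℝ)} (hAB : Disjoint A B)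
    (hAc : IsCompact A) (hBc : IsClosed B) (hAv : Convex ℝ A) (hBv : Convex ℝ B) :
    ∃ c : Fin n → ℝ, ∀ a ∈ A, ∀ b ∈ B, c ⬝ᵥ a < c ⬝ᵥ b := by
  obtain ⟨f, u, v, hfa, huv, hfb⟩ := geometric_hahn_banach_compact_closed hAv hAc hBv hBc hAB
  have hf : ∀ x, (dotProductEquiv ℝ (Fin n)).symm f ⬝ᵥ x = f x := fun x =>
    LinearMap.congr_fun ((dotProductEquiv ℝ (Fin n)).apply_symm_apply f) x
  exact ⟨_, fun a ha b hb => by rw [hf, hf]; linarith [hfa a ha, hfb b hb]⟩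

/-- The weights are `(c + K) / (2 K)` with `K > ‖c‖`; on the simplex `w ⬝ᵥ x` is then an
increasing affine function of `c ⬝ᵥ x`. -/
theorem exists_weights_mem_Icc_of_dotProduct_lt {n : ℕ} (c : Fin n → ℝ) :
    ∃ w : Fin n → ℝ, (∀ j, w j ∈ Set.Icc 0 1) ∧ ∀ x ∈ probSimplex n, ∀ y ∈ probSimplex n,
      c ⬝ᵥ x < c ⬝ᵥ y → w ⬝ᵥ x < w ⬝ᵥ y := by
  set K := ‖c‖ + 1
  have hcK : ∀ j, |c j| < K := fun j => (norm_le_pi_norm c j).trans_lt (lt_add_one _)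
  have hval : ∀ x ∈ probSimplex n,
      ((2 * K)⁻¹ • (c + K • 1)) ⬝ᵥ x = (2 * K)⁻¹ * (c ⬝ᵥ x + K) := by
    intro x hx
    rw [smul_dotProduct, add_dotProduct, smul_dotProduct, one_dotProduct, hx.2, smul_eq_mul,
      smul_eq_mul, mul_one]
  refine ⟨(2 * K)⁻¹ • (c + K • 1), fun j => ?_, fun x hx y hy hxy => ?_⟩
  · have := abs_lt.mp (hcK j)
    simp only [Pi.smul_apply, Pi.add_apply, Pi.one_apply, smul_eq_mul, mul_one, Set.mem_Icc]
    constructor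
    · exact mul_nonneg (by positivity) (by linarith)
    · rw [inv_mul_le_iff₀ (by positivity)]; linarith
  · rw [hval x hx, hval y hy]
    gcongr

theorem exists_weights_mem_Icc_separating {n : ℕ} {A B : Set (Fin n → ℝ)}
    (hA : A ⊆ probSimplex n) (hB : B ⊆ probSimplex n) (hAB : Disjoint A B)
    (hAc : IsCompact A) (hBc : IsClosed B) (hAv : Convex ℝ A) (hBv : Convex ℝ B) :
    ∃ w : Fin n → ℝ, (∀ j, w j ∈ Set.Icc 0 1) ∧ ∀ a ∈ A, ∀ b ∈ B, w ⬝ᵥ a < w ⬝ᵥ b := by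
  obtain ⟨c, hc⟩ := exists_dotProduct_lt_of_disjoint hAB hAc hBc hAv hBv
  obtain ⟨w, hw, hmono⟩ := exists_weights_mem_Icc_of_dotProduct_lt c
  exact ⟨w, hw, fun a ha b hb => hmono a (hA ha) b (hB hb) (hc a ha b hb)⟩

def splitMatrix (k : ℕ) {ι : Type*} (w : ι → ℝ) : Matrix (Fin k) ι ℝ :=
  Matrix.of fun i j => if (i : ℕ) = 0 then w j else if (i : ℕ) = 1 then 1 - w j else 0

section splitMatrix

variable {ι : Type*} {w : ι → ℝ}

theorem splitMatrix_nonneg (k : ℕ) (hw : ∀ j, w j ∈ Set.Icc 0 1) (i : Fin k) (j : ι) :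
    0 ≤ splitMatrix k w i j := by
  have := hw j
  simp only [splitMatrix, of_apply]
  split_ifs <;> simp_all

theorem one_vecMul_splitMatrix {k : ℕ} (hk : 2 ≤ k) : 1 ᵥ* splitMatrix k w = 1 := by
  obtain ⟨k, rfl⟩ := Nat.exists_eq_add_of_le' hk
  ext j
  simp [vecMul, dotProduct, splitMatrix, Fin.sum_univ_succ]

theorem splitMatrix_mulVec_apply_of_val_eq_zero [Fintype ι] (k : ℕ) (x : ι → ℝ) {i : Fin k}
    (hi : (i : ℕ) = 0) : (splitMatrix k w *ᵥ x) i = w ⬝ᵥ x := by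
  simp [splitMatrix, mulVec, hi]

end splitMatrix

def levelWeights {n : ℕ} (w : Fin n → ℝ) (m : ℕ) (j : Fin m) : ℝ :=
  if h : m = n then w (j.cast h) else if (j : ℕ) = 0 then 1 else 0

def splitMaps {n : ℕ} (w : Fin n → ℝ) (m : ℕ) : (Fin m → ℝ) →ᵃ[ℝ] (Fin (m - 1) → ℝ) :=
  (toLin' (splitMatrix (m - 1) (levelWeights w m))).toAffineMap

section splitMaps

variable {n : ℕ} {w : Fin n → ℝ}

theorem levelWeights_mem_Icc (hw : ∀ j, w j ∈ Set.Icc 0 1) (m : ℕ) (j : Fin m) :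
    levelWeights w m j ∈ Set.Icc 0 1 := by
  unfold levelWeights
  split_ifs <;> simp [hw]

theorem splitMaps_mapsTo (hw : ∀ j, w j ∈ Set.Icc 0 1) {m : ℕ} (hm : 3 ≤ m) :
    Set.MapsTo (splitMaps w m) (probSimplex m) (probSimplex (m - 1)) := fun _ hx =>
  mulVec_mem_probSimplex (splitMatrix_nonneg _ (levelWeights_mem_Icc hw m))
    (one_vecMul_splitMatrix (by omega)) hx

@[simp]
theorem levelWeights_self : levelWeights w n = w := by
  ext j
  simp [levelWeights]

theorem splitMaps_self_apply_of_val_eq_zero (x : Fin n → ℝ) {i : Fin (n - 1)}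
    (hi : (i : ℕ) = 0) : splitMaps w n x i = w ⬝ᵥ x := by
  simp [splitMaps, splitMatrix_mulVec_apply_of_val_eq_zero _ _ hi]

theorem splitMaps_apply_of_ne {m : ℕ} (hm : m ≠ n) (y : Fin m → ℝ) {i : Fin (m - 1)}
    (hi : (i : ℕ) = 0) : splitMaps w m y i = y ⟨0, by omega⟩ := by
  simp only [splitMaps, LinearMap.coe_toAffineMap, toLin'_apply,
    splitMatrix_mulVec_apply_of_val_eq_zero _ _ hi, levelWeights, hm, dotProduct, dite_false,
    ite_mul, one_mul, zero_mul]
  exact (Finset.sum_eq_single_of_mem (⟨0, by omega⟩ : Fin m) (Finset.mem_univ _) fun j _ hj =>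
    if_neg fun h => hj (Fin.ext h)).trans (if_pos rfl)

theorem chainQ_splitMaps_apply_of_val_eq_zero (x : Fin n → ℝ) {s : ℕ} (hs : 1 ≤ s)
    {i : Fin (n - s)} (hi : (i : ℕ) = 0) : chainQ (splitMaps w) n s x i = w ⬝ᵥ x := by
  induction s, hs using Nat.le_induction with
  | base => exact splitMaps_self_apply_of_val_eq_zero x hi
  | succ s hs ih =>
    have hsn : s + 1 < n := by have := i.isLt; omega
    exact (splitMaps_apply_of_ne (m := n - s) (by omega) _ hi).trans
      (ih (i := ⟨0, by omega⟩) rfl)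

theorem exists_comp_chainQ_splitMaps_eq_dotProduct {s : ℕ} (hs : s < n) :
    ∃ r : (Fin (n - s) → ℝ) → ℝ, ∀ x, r (chainQ (splitMaps w) n s x) = w ⬝ᵥ x := by
  rcases s with _ | s
  · exact ⟨(w ⬝ᵥ ·), fun _ => rfl⟩
  · exact ⟨fun y => y ⟨0, by omega⟩,
      fun x => chainQ_splitMaps_apply_of_val_eq_zero x (by omega) rfl⟩

end splitMaps

theorem stmt_10_general (d : ℕ)
    (A B : Set (Fin (d + 1) → ℝ))
    (hA : A ⊆ probSimplex (d + 1)) (hB : B ⊆ probSimplex (d + 1))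
    (hAB : Disjoint A B)
    (hAc : IsCompact A) (hBc : IsCompact B)
    (hAv : Convex ℝ A) (hBv : Convex ℝ B) :
    ∃ Q : ∀ m : ℕ, (Fin m → ℝ) →ᵃ[ℝ] (Fin (m - 1) → ℝ),
      (∀ m : ℕ, 4 ≤ m → m ≤ d + 1 → Set.MapsTo (Q m) (probSimplex m) (probSimplex (m - 1)))
      ∧ Disjoint (chainQ Q (d + 1) (d - 2) '' A) (chainQ Q (d + 1) (d - 2) '' B) := by
  obtain ⟨w, hw, hsep⟩ :=
    exists_weights_mem_Icc_separating hA hB hAB hAc hBc.isClosed hAv hBv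
  obtain ⟨r, hr⟩ := exists_comp_chainQ_splitMaps_eq_dotProduct (w := w) (s := d - 2) (by omega)
  refine ⟨splitMaps w, fun m hm _ => splitMaps_mapsTo hw (by omega), ?_⟩
  rw [Set.disjoint_left]
  rintro _ ⟨a, ha, rfl⟩ ⟨b, hb, hab⟩
  exact (hsep a ha b hb).ne (by rw [← hr, ← hr, hab])

/-- Quantization lemma: for disjoint compact convex subsets `A, B` of the probability
simplex `Δ^(d) ⊂ ℝ^{d+1}` (`d ≥ 2`), there exist affine maps, each mapping the
probability simplex of one dimension into that of the next lower dimension, whose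
composition (`d−2` steps, ending in `Δ^(2) ⊂ ℝ^3`) keeps the images of `A` and `B`
disjoint. -/
theorem stmt_10 (d : ℕ) (hd : 2 ≤ d)
    (A B : Set (Fin (d + 1) → ℝ))
    (hA : A ⊆ probSimplex (d + 1)) (hB : B ⊆ probSimplex (d + 1))
    (hAB : Disjoint A B)
    (hAc : IsCompact A) (hBc : IsCompact B)
    (hAv : Convex ℝ A) (hBv : Convex ℝ B) :
    ∃ Q : ∀ m : ℕ, (Fin m → ℝ) →ᵃ[ℝ] (Fin (m - 1) → ℝ),
      (∀ m : ℕ, 4 ≤ m → m ≤ d + 1 → Set.MapsTo (Q m) (probSimplex m) (probSimplex (m - 1)))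
      ∧ Disjoint (chainQ Q (d + 1) (d - 2) '' A) (chainQ Q (d + 1) (d - 2) '' B) :=
  stmt_10_general d A B hA hB hAB hAc hBc hAv hBv
end

section
/- Let W : X → P(Y) be a channel on finite alphabets with pairwise distinct rows: W(δ_x) ≠ W(δ_{x'}) whenever x ≠ x'. If J ≥ |X|·(|Y|−1), then the map p ↦ Σ_x p(x) (W(δ_x))^{⊗J} from probability distributions on X to probability distributions on Y^J is injective. -/
/-!
Put `r = p - q` and `⟨w, g⟩ = ∑ y, w y * g y`. Testing the equality of the two mixtures against
product functions `y ↦ ∏ j, g j (y j)` gives `∑ x, r x ∏ j ⟨W x, g j⟩ = 0` for every family `g`.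
Since the rows are stochastic, taking `g j = u` for `k` coordinates and `g j = 1` for the others
yields the moments `∑ x, r x ⟨W x, u⟩ ^ k = 0` for all `k ≤ J`. A `u` off the finitely many
hyperplanes `⟨W x - W x', ·⟩ = 0` separates the distinct rows, so the points `⟨W x, u⟩` are
distinct, and as `|X| ≤ J + 1` the Vandermonde system forces `r = 0`.
-/

open Finset Function

theorem exists_injective_sum_mul {K X Y : Type*} [Field K] [Infinite K] [Finite X] [Fintype Y]
    {W : X → Y → K} (hW : Injective W) :
    ∃ u : Y → K, Injective fun x => ∑ y, W x y * u y := by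
  classical
  obtain ⟨f, hf⟩ := Module.exists_dual_forall_apply_ne_zero (K := K)
    (fun e : {e : X × X // e.1 ≠ e.2} => W e.1.1 - W e.1.2)
    (fun e => sub_ne_zero.mpr (hW.ne e.2))
  refine ⟨fun y => f fun y' => if y = y' then 1 else 0, fun x x' hxx' => ?_⟩
  by_contra hne
  apply hf ⟨(x, x'), hne⟩
  rw [map_sub, sub_eq_zero, LinearMap.pi_apply_eq_sum_univ f (W x),
    LinearMap.pi_apply_eq_sum_univ f (W x')]
  simpa only [smul_eq_mul] using hxx'

theorem eq_zero_of_forall_sum_mul_pow_eq_zero {R ι : Type*} [CommRing R] [IsDomain R]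
    [Fintype ι] {t r : ι → R} (ht : Injective t)
    (h : ∀ k < Fintype.card ι, ∑ i, r i * t i ^ k = 0) : r = 0 := by
  set e := Fintype.equivFin ι
  have hvandermonde : r ∘ e.symm = 0 :=
    Matrix.eq_zero_of_forall_pow_sum_mul_pow_eq_zero (ht.comp e.symm.injective) fun k => by
      simpa only [comp_apply, e.symm.sum_comp fun i => r i * t i ^ (k : ℕ)] using h k k.isLt
  funext i
  simpa using congrFun hvandermonde (e i)

section Mixture

variable {R X Y ι : Type*} [CommSemiring R] [Fintype X] [Fintype Y] {W : X → Y → R} {r : X → R}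

theorem sum_mul_prod_sum_eq_zero [Fintype ι] [DecidableEq ι]
    (hr : ∀ f : ι → Y, ∑ x, r x * ∏ j, W x (f j) = 0) (g : ι → Y → R) :
    ∑ x, r x * ∏ j, ∑ y, W x y * g j y = 0 := by
  simp_rw [Finset.prod_univ_sum, Fintype.piFinset_univ, prod_mul_distrib, mul_sum]
  rw [sum_comm]
  refine sum_eq_zero fun f _ => ?_
  calc ∑ x, r x * ((∏ j, W x (f j)) * ∏ j, g j (f j))
      = (∑ x, r x * ∏ j, W x (f j)) * ∏ j, g j (f j) := by
        rw [sum_mul]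
        exact sum_congr rfl fun x _ => by ring
    _ = 0 := by rw [hr f, zero_mul]

theorem sum_mul_pow_eq_zero {J : ℕ} (hWsum : ∀ x, ∑ y, W x y = 1)
    (hr : ∀ f : Fin J → Y, ∑ x, r x * ∏ j, W x (f j) = 0) (u : Y → R) {k : ℕ} (hk : k ≤ J) :
    ∑ x, r x * (∑ y, W x y * u y) ^ k = 0 := by
  classical
  obtain ⟨s, -, hs⟩ := exists_subset_card_eq (s := (univ : Finset (Fin J))) (by simpa using hk)
  have hprod : ∀ x, ∏ j, ∑ y, W x y * (if j ∈ s then u else 1) y = (∑ y, W x y * u y) ^ k := by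
    intro x
    have hfactor : ∀ j, ∑ y, W x y * (if j ∈ s then u else 1) y =
        if j ∈ s then ∑ y, W x y * u y else 1 := by
      intro j
      split_ifs
      · rfl
      · simpa using hWsum x
    rw [prod_congr rfl fun j _ => hfactor j, Fintype.prod_ite_mem, prod_const, hs]
  simpa only [hprod] using sum_mul_prod_sum_eq_zero hr fun j => if j ∈ s then u else 1

end Mixture

theorem subsingleton_of_injective_of_sum_eq {R X Y : Type*} [AddCommMonoid R] [Fintype Y]
    [Subsingleton Y] {W : X → Y → R} {c : R} (hW : Injective W) (hWsum : ∀ x, ∑ y, W x y = c) :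
    Subsingleton X :=
  ⟨fun x x' => hW <| funext fun y => by
    simpa only [Fintype.sum_subsingleton _ y] using (hWsum x).trans (hWsum x').symm⟩

theorem card_le_card_mul_pred_add_one {R X Y : Type*} [AddCommMonoid R] [Fintype X] [Fintype Y]
    {W : X → Y → R} {c : R} (hW : Injective W) (hWsum : ∀ x, ∑ y, W x y = c) :
    Fintype.card X ≤ Fintype.card X * (Fintype.card Y - 1) + 1 := by
  rcases le_or_gt (Fintype.card Y) 1 with hY | hY
  · have := Fintype.card_le_one_iff_subsingleton.mp hY
    have hX : Fintype.card X ≤ 1 :=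
      Fintype.card_le_one_iff_subsingleton.mpr (subsingleton_of_injective_of_sum_eq hW hWsum)
    omega
  · have hX := Nat.le_mul_of_pos_right (Fintype.card X) (Nat.sub_pos_of_lt hY)
    omega

theorem stmt_11_general (X Y : Type) [Fintype X] [Fintype Y]
    (W : X → Y → ℝ) (hWsum : ∀ x, ∑ y, W x y = 1)
    (hdist : ∀ x x' : X, x ≠ x' → W x ≠ W x')
    (J : ℕ) (hJ : Fintype.card X * (Fintype.card Y - 1) ≤ J)
    (p q : X → ℝ)
    (h : (fun yJ : Fin J → Y => ∑ x, p x * ∏ j, W x (yJ j))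
       = (fun yJ : Fin J → Y => ∑ x, q x * ∏ j, W x (yJ j))) :
    p = q := by
  have hW : Injective W := fun x x' => not_imp_not.mp (hdist x x')
  have hr : ∀ f : Fin J → Y, ∑ x, (p - q) x * ∏ j, W x (f j) = 0 := fun f => by
    simp only [Pi.sub_apply, sub_mul, sum_sub_distrib, congrFun h f, sub_self]
  obtain ⟨u, hu⟩ := exists_injective_sum_mul hW
  have hcard := card_le_card_mul_pred_add_one hW hWsum
  exact sub_eq_zero.mp <| eq_zero_of_forall_sum_mul_pow_eq_zero hu fun k hk =>
    sum_mul_pow_eq_zero hWsum hr u (by omega)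

/-- If a channel `W : X → P(Y)` has pairwise distinct rows and `J ≥ |X|·(|Y|−1)`, then
`p ↦ Σ_x p(x) (W(δ_x))^{⊗J}` is injective on probability distributions on `X`. -/
theorem stmt_11 (X Y : Type) [Fintype X] [Fintype Y]
    (W : X → Y → ℝ) (hWpos : ∀ x y, 0 ≤ W x y) (hWsum : ∀ x, ∑ y, W x y = 1)
    (hdist : ∀ x x' : X, x ≠ x' → W x ≠ W x')
    (J : ℕ) (hJ : Fintype.card X * (Fintype.card Y - 1) ≤ J)
    (p q : X → ℝ)
    (hp0 : ∀ x, 0 ≤ p x) (hp1 : ∑ x, p x = 1)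
    (hq0 : ∀ x, 0 ≤ q x) (hq1 : ∑ x, q x = 1)
    (h : (fun yJ : Fin J → Y => ∑ x, p x * ∏ j, W x (yJ j))
       = (fun yJ : Fin J → Y => ∑ x, q x * ∏ j, W x (yJ j))) :
    p = q :=
  stmt_11_general X Y W hWsum hdist J hJ p q h
end

section
/- If p, q ∈ P(Y) are distinct probability distributions on a finite set Y, then for J ≥ |Y| − 1 the product distributions p^{⊗J} and q^{⊗J} are linearly independent; more generally, for distinct distributions p_1,…,p_m on Y and J ≥ m − 1, the vectors p_1^{⊗J},…,p_m^{⊗J} are linearly independent in ℝ^{Y^J}. -/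
open Finset Polynomial

open Finset Polynomial

/-- separating functional -/
lemma sep_exists {Y : Type} [Fintype Y] {m : ℕ} (P : Fin m → Y → ℝ)
    (hne : ∀ i j : Fin m, i ≠ j → P i ≠ P j) :
    ∃ g : Y → ℝ, Function.Injective (fun i => ∑ y, g y * P i y) := by
  classical
  set ι := {pr : Fin m × Fin m // pr.1 ≠ pr.2}
  set L : (Y → ℝ) → ι → ℝ := fun g pr => ∑ y, g y * (P pr.1.1 y - P pr.1.2 y) with hL
  set S : ι → Subspace ℝ (Y → ℝ) := fun pr =>
    LinearMap.ker (∑ y : Y, (P pr.1.1 y - P pr.1.2 y) • (LinearMap.proj y : (Y → ℝ) →ₗ[ℝ] ℝ))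
  have hSmem : ∀ (pr : ι) (g : Y → ℝ), g ∈ S pr ↔ L g pr = 0 := by
    intro pr g
    simp [S, L, LinearMap.mem_ker, LinearMap.sum_apply, mul_comm]
  have hStop : ∀ pr : ι, S pr ≠ ⊤ := by
    intro pr htop
    have hd : P pr.1.1 - P pr.1.2 ≠ 0 := sub_ne_zero.mpr (hne _ _ pr.2)
    have : (P pr.1.1 - P pr.1.2) ∈ S pr := htop ▸ Submodule.mem_top
    rw [hSmem] at this
    apply hd
    funext y
    have hnn : ∀ y ∈ Finset.univ, (0:ℝ) ≤ (P pr.1.1 y - P pr.1.2 y) * (P pr.1.1 y - P pr.1.2 y) :=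
      fun y _ => mul_self_nonneg _
    have := (Finset.sum_eq_zero_iff_of_nonneg hnn).mp (by simpa [L, Pi.sub_apply] using this) y
      (Finset.mem_univ y)
    have := mul_self_eq_zero.mp this
    simpa using this
  have hcover : ⋃ pr : ι, ((S pr : Set (Y → ℝ))) ≠ Set.univ := by
    intro h
    obtain ⟨pr, hpr⟩ := Subspace.exists_eq_top_of_iUnion_eq_univ h
    exact hStop pr hpr
  obtain ⟨g, hg⟩ := Set.ne_univ_iff_exists_notMem _ |>.mp hcover
  refine ⟨g, fun i j hij => ?_⟩
  by_contra hne'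
  have : g ∈ S ⟨(i, j), hne'⟩ := by
    rw [hSmem]
    simp only [L]
    rw [← sub_eq_zero] at hij
    simpa [mul_sub, Finset.sum_sub_distrib] using hij
  exact hg (Set.mem_iUnion.mpr ⟨⟨(i, j), hne'⟩, this⟩)

lemma main_li {Y : Type} [Fintype Y] (m : ℕ) (P : Fin m → Y → ℝ)
    (hsum : ∀ i, ∑ y, P i y = 1)
    (hne : ∀ i j : Fin m, i ≠ j → P i ≠ P j) (J : ℕ) (hJ : m - 1 ≤ J) :
    LinearIndependent ℝ (fun i : Fin m => fun yJ : Fin J → Y => ∏ j, P i (yJ j)) := by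
  classical
  rw [Fintype.linearIndependent_iff]
  intro c hc
  obtain ⟨g, hg⟩ := sep_exists P hne
  set a : Fin m → ℝ := fun i => ∑ y, g y * P i y with ha
  have key : ∀ t : ℝ, ∑ i, c i * (a i + t) ^ J = 0 := by
    intro t
    have hfa : ∀ i, a i + t = ∑ y, (g y + t) * P i y := by
      intro i
      simp [ha, add_mul, Finset.sum_add_distrib, ← Finset.mul_sum, hsum i]
    have hptw : ∀ yJ : Fin J → Y, ∑ i, c i * ∏ j, P i (yJ j) = 0 := by
      intro yJ
      have := congrFun hc yJ
      simpa using this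
    calc ∑ i, c i * (a i + t) ^ J
        = ∑ i, c i * ∑ yJ ∈ Fintype.piFinset (fun _ : Fin J => (Finset.univ : Finset Y)),
            ∏ j, (g (yJ j) + t) * P i (yJ j) := by
          refine Finset.sum_congr rfl fun i _ => ?_
          congr 1
          rw [hfa i,
            ← Finset.prod_univ_sum (fun _ : Fin J => (Finset.univ : Finset Y))
              (fun _ y => (g y + t) * P i y),
            Finset.prod_const, Finset.card_univ, Fintype.card_fin]
      _ = ∑ yJ ∈ Fintype.piFinset (fun _ : Fin J => (Finset.univ : Finset Y)),
            (∏ j, (g (yJ j) + t)) * ∑ i, c i * ∏ j, P i (yJ j) := by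
          simp_rw [Finset.mul_sum]
          rw [Finset.sum_comm]
          refine Finset.sum_congr rfl fun yJ _ => Finset.sum_congr rfl fun i _ => ?_
          rw [Finset.prod_mul_distrib]
          ring
      _ = 0 := by
          refine Finset.sum_eq_zero fun yJ _ => ?_
          rw [hptw yJ, mul_zero]
  -- polynomial identity
  have hq : (∑ i, C (c i) * (X + C (a i)) ^ J : ℝ[X]) = 0 := by
    apply Polynomial.funext
    intro t
    simp only [eval_finset_sum, eval_zero, eval_mul, eval_pow, eval_add, eval_C, eval_X]
    simpa [add_comm] using key t
  have hcoeff : ∀ k : ℕ, k ≤ J → ∑ i, c i * a i ^ k = 0 := by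
    intro k hk
    have h0 := congrArg (fun q : ℝ[X] => q.coeff (J - k)) hq
    simp only [finset_sum_coeff, coeff_C_mul, coeff_X_add_C_pow, coeff_zero] at h0
    have hJk : J - (J - k) = k := Nat.sub_sub_self hk
    rw [hJk] at h0
    have hch : (J.choose (J - k) : ℝ) ≠ 0 :=
      Nat.cast_ne_zero.mpr (Nat.choose_pos (Nat.sub_le J k)).ne'
    have h1 : (∑ i, c i * a i ^ k) * (J.choose (J - k) : ℝ) = 0 := by
      rw [Finset.sum_mul, ← h0]
      exact Finset.sum_congr rfl fun i _ => by ring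
    exact (mul_eq_zero.mp h1).resolve_right hch
  have : c = 0 := by
    apply Matrix.eq_zero_of_forall_pow_sum_mul_pow_eq_zero hg
    intro i
    exact hcoeff i (le_trans (Nat.le_pred_of_lt i.2) hJ)
  exact fun i => congrFun this i

/-- Distinct probability distributions `p ≠ q` on a finite set `Y` have linearly
independent `J`-fold product distributions once `J ≥ |Y|−1`; more generally, for `m`
pairwise distinct distributions and `J ≥ m−1` the `J`-fold products are linearly
independent. -/
theorem stmt_12 (Y : Type) [Fintype Y] :
    (∀ p q : Y → ℝ, (∀ y, 0 ≤ p y) → ∑ y, p y = 1 → (∀ y, 0 ≤ q y) → ∑ y, q y = 1 →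
      p ≠ q → ∀ J : ℕ, Fintype.card Y - 1 ≤ J →
        LinearIndependent ℝ
          ![fun yJ : Fin J → Y => ∏ j, p (yJ j), fun yJ : Fin J → Y => ∏ j, q (yJ j)])
    ∧ (∀ (m : ℕ) (P : Fin m → Y → ℝ), (∀ i y, 0 ≤ P i y) → (∀ i, ∑ y, P i y = 1) →
        (∀ i j : Fin m, i ≠ j → P i ≠ P j) →
        ∀ J : ℕ, m - 1 ≤ J →
          LinearIndependent ℝ (fun i : Fin m => fun yJ : Fin J → Y => ∏ j, P i (yJ j))) := by
  constructor
  · intro p q hp hps hq hqs hpq J hJ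
    by_cases hcard : 2 ≤ Fintype.card Y
    · have hJ' : 2 - 1 ≤ J := by omega
      have hdist : ∀ i j : Fin 2, i ≠ j → (![p, q] : Fin 2 → Y → ℝ) i ≠ ![p, q] j := by
        intro i j hij h
        apply hpq
        fin_cases i <;> fin_cases j <;> simp_all
      have hsums : ∀ i : Fin 2, ∑ y, (![p, q] : Fin 2 → Y → ℝ) i y = 1 := by
        intro i; fin_cases i <;> simpa
      have h := main_li 2 ![p, q] hsums hdist J hJ'
      have heq : (fun i : Fin 2 => fun yJ : Fin J → Y => ∏ j, (![p, q] : Fin 2 → Y → ℝ) i (yJ j))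
          = ![fun yJ : Fin J → Y => ∏ j, p (yJ j), fun yJ : Fin J → Y => ∏ j, q (yJ j)] := by
        funext i
        fin_cases i <;> simp
      rwa [heq] at h
    · exfalso
      apply hpq
      have hsub : Subsingleton Y := Fintype.card_le_one_iff_subsingleton.mp (by omega)
      funext y
      letI : Unique Y := uniqueOfSubsingleton y
      have h1 : p y = 1 := by
        rw [← hps, Fintype.sum_unique]
        exact congrArg p (Subsingleton.elim _ _)
      have h2 : q y = 1 := by
        rw [← hqs, Fintype.sum_unique]
        exact congrArg q (Subsingleton.elim _ _)
      rw [h1, h2]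
  · intro m P _ hsum hne J hJ
    exact main_li m P hsum hne J hJ
end

section
/- Let W be an AVC given by stochastic matrices (W_s)_{s∈S} from X to Y with all rows w(·|x,s) pairwise distinct across pairs (x,s). Then for J ≥ |X|·|S|·(|Y|−1), the channel W^{⊗J} ∘ (E_X ⊗ E_S), which maps (x,s) to the J-fold product distribution w(·|x,s)^{⊗J} on Y^J, is injective as a linear map from ℝ^{X×S} to ℝ^{Y^J}, and consequently the block-repeated AVC is non-symmetrizable under the maximum error criterion: for all x ≠ x', conv{w(·|x,s)^{⊗J} : s ∈ S} ∩ conv{w(·|x',s)^{⊗J} : s ∈ S} = ∅. -/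
open Finset

lemma aux_exists_t {Y : Type} [Fintype Y] (D : Finset (Y → ℝ))
    (hD : ∀ v ∈ D, v ≠ 0) : ∃ t : Y → ℝ, ∀ v ∈ D, ∑ y, t y * v y ≠ 0 := by
  classical
  induction D using Finset.induction_on with
  | empty => exact ⟨0, by simp⟩
  | @insert v D hvD ih =>
    obtain ⟨t, ht⟩ := ih (fun u hu => hD u (Finset.mem_insert_of_mem hu))
    have hv0 : v ≠ 0 := hD v (Finset.mem_insert_self _ _)
    have hvv : ∑ y, v y * v y ≠ 0 := by
      intro h
      apply hv0
      funext y
      have hnn : ∀ z ∈ Finset.univ, 0 ≤ v z * v z := fun z _ => mul_self_nonneg _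
      have h2 := (Finset.sum_eq_zero_iff_of_nonneg hnn).1 h y (Finset.mem_univ y)
      rw [Pi.zero_apply]
      exact mul_self_eq_zero.mp h2
    obtain ⟨ε, hε⟩ := Infinite.exists_notMem_finset
      ((insert v D).image fun u => -(∑ y, t y * u y) / (∑ y, v y * u y))
    refine ⟨fun y => t y + ε * v y, ?_⟩
    intro u hu h0
    have hexp : ∑ y, (t y + ε * v y) * u y = (∑ y, t y * u y) + ε * (∑ y, v y * u y) := by
      rw [Finset.mul_sum, ← Finset.sum_add_distrib]
      exact Finset.sum_congr rfl fun y _ => by ring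
    rw [hexp] at h0
    by_cases hvu : (∑ y, v y * u y) = 0
    · rcases Finset.mem_insert.1 hu with rfl | huD
      · exact hvv hvu
      · rw [hvu, mul_zero, add_zero] at h0
        exact ht u huD h0
    · apply hε
      refine Finset.mem_image.2 ⟨u, hu, ?_⟩
      field_simp
      linarith [h0]

lemma aux_prod_ite_lt (J m : ℕ) (hm : m ≤ J) (a : ℝ) :
    ∏ j : Fin J, (if (j : ℕ) < m then a else 1) = a ^ m := by
  classical
  rw [Finset.prod_ite, Finset.prod_const, Finset.prod_const, one_pow, mul_one]
  congr 1
  have hset : (Finset.univ.filter fun j : Fin J => (j : ℕ) < m)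
      = Finset.map (Fin.castLEEmb hm) Finset.univ := by
    ext j
    constructor
    · intro hj
      rcases Finset.mem_filter.1 hj with ⟨-, hj⟩
      exact Finset.mem_map.2 ⟨⟨(j : ℕ), hj⟩, Finset.mem_univ _, Fin.ext rfl⟩
    · intro hj
      rcases Finset.mem_map.1 hj with ⟨i, -, rfl⟩
      refine Finset.mem_filter.2 ⟨Finset.mem_univ _, ?_⟩
      simpa using i.isLt
  rw [hset, Finset.card_map, Finset.card_univ, Fintype.card_fin]

lemma aux_moment {Y : Type} [Fintype Y] (J m : ℕ) (hm : m ≤ J) (t p : Y → ℝ)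
    (hp : ∑ y, p y = 1) :
    ∑ yJ : Fin J → Y, (∏ j : Fin J, (if (j : ℕ) < m then t (yJ j) else 1)) * ∏ j, p (yJ j)
      = (∑ y, t y * p y) ^ m := by
  classical
  have h1 : ∀ yJ : Fin J → Y,
      (∏ j : Fin J, (if (j : ℕ) < m then t (yJ j) else 1)) * ∏ j, p (yJ j)
        = ∏ j : Fin J, ((if (j : ℕ) < m then t (yJ j) else 1) * p (yJ j)) :=
    fun yJ => (Finset.prod_mul_distrib).symm
  simp_rw [h1]
  have hps := Finset.prod_univ_sum (fun _ : Fin J => (Finset.univ : Finset Y))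
    (fun j y => (if (j : ℕ) < m then t y else 1) * p y)
  rw [← Fintype.piFinset_univ, ← hps]
  have h2 : ∀ j : Fin J, (∑ y, (if (j : ℕ) < m then t y else 1) * p y)
      = if (j : ℕ) < m then (∑ y, t y * p y) else 1 := by
    intro j; split
    · rfl
    · simpa using hp
  simp_rw [h2]
  exact aux_prod_ite_lt J m hm _

lemma aux_convex_weights {S : Type} [Fintype S] {E : Type} [AddCommGroup E] [Module ℝ E]
    {v : S → E} {q : E} (hq : q ∈ convexHull ℝ (Set.range v)) :
    ∃ a : S → ℝ, (∀ i, 0 ≤ a i) ∧ ∑ i, a i = 1 ∧ ∑ i, a i • v i = q := by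
  classical
  rw [convexHull_range_eq_exists_affineCombination] at hq
  obtain ⟨s, wg, h0, h1, h2⟩ := hq
  refine ⟨fun i => if i ∈ s then wg i else 0, ?_, ?_, ?_⟩
  · intro i
    dsimp only
    split
    exacts [h0 _ ‹_›, le_rfl]
  · dsimp only
    rw [Finset.sum_ite_mem, Finset.univ_inter, h1]
  · dsimp only
    rw [← h2, affineCombination_eq_linear_combination s v wg h1]
    simp_rw [ite_smul, zero_smul]
    rw [Finset.sum_ite_mem, Finset.univ_inter]

lemma aux_kernel {X S Y : Type} [Fintype X] [Fintype S] [Fintype Y]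
    (w : X → S → Y → ℝ) (hsum : ∀ x s, ∑ y, w x s y = 1)
    (hdist : ∀ (x x' : X) (s s' : S), (x, s) ≠ (x', s') → w x s ≠ w x' s')
    (J : ℕ) (hJ : Fintype.card X * Fintype.card S * (Fintype.card Y - 1) ≤ J)
    (c : X × S → ℝ)
    (hc : ∀ yJ : Fin J → Y, ∑ ps : X × S, c ps * ∏ j, w ps.1 ps.2 (yJ j) = 0) :
    c = 0 := by
  classical
  rcases isEmpty_or_nonempty (X × S) with hE | hNE
  · funext ps; exact isEmptyElim ps
  rcases isEmpty_or_nonempty Y with hYE | hYNE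
  · obtain ⟨ps⟩ := hNE
    have := hsum ps.1 ps.2
    simp [Finset.univ_eq_empty] at this
  -- N ≤ J + 1
  have hN : Fintype.card (X × S) ≤ J + 1 := by
    by_cases h2 : 2 ≤ Fintype.card Y
    · have h3 : Fintype.card (X × S) ≤ Fintype.card (X × S) * (Fintype.card Y - 1) :=
        Nat.le_mul_of_pos_right _ (by omega)
      rw [Fintype.card_prod] at h3
      rw [Fintype.card_prod]
      omega
    · have h1 : Fintype.card Y = 1 := by
        have := Fintype.card_pos_iff.2 hYNE
        omega
      obtain ⟨y0, hy0⟩ := Fintype.card_eq_one_iff.1 h1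
      have huniv : (Finset.univ : Finset Y) = {y0} := by
        ext y; simp [hy0 y]
      have hone : ∀ (x : X) (s : S), w x s y0 = 1 := by
        intro x s
        have := hsum x s
        rwa [huniv, Finset.sum_singleton] at this
      have hle : Fintype.card (X × S) ≤ 1 := by
        refine Fintype.card_le_one_iff.2 fun a b => ?_
        by_contra hab
        refine hdist a.1 b.1 a.2 b.2 ?_ (funext fun y => by rw [hy0 y, hone, hone])
        simpa using hab
      omega
  -- distinct rows
  have hrow : Function.Injective (fun ps : X × S => w ps.1 ps.2) := by
    intro a b hab
    by_contra hne
    exact hdist a.1 b.1 a.2 b.2 (by simpa using hne) hab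
  -- generic functional
  set D : Finset (Y → ℝ) :=
    (Finset.univ.filter fun q : (X × S) × (X × S) => q.1 ≠ q.2).image
      (fun q => w q.1.1 q.1.2 - w q.2.1 q.2.2) with hDdef
  have hD : ∀ v ∈ D, v ≠ 0 := by
    intro v hv
    rcases Finset.mem_image.1 hv with ⟨q, hq, rfl⟩
    rcases Finset.mem_filter.1 hq with ⟨-, hne⟩
    exact sub_ne_zero.2 fun h => hne (hrow h)
  obtain ⟨t, ht⟩ := aux_exists_t D hD
  set lam : X × S → ℝ := fun ps => ∑ y, t y * w ps.1 ps.2 y with hlamdef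
  have hlam : Function.Injective lam := by
    intro a b hab
    by_contra hne
    have hmem : w a.1 a.2 - w b.1 b.2 ∈ D :=
      Finset.mem_image.2 ⟨(a, b), Finset.mem_filter.2 ⟨Finset.mem_univ _, hne⟩, rfl⟩
    apply ht _ hmem
    have : ∑ y, t y * (w a.1 a.2 - w b.1 b.2) y
        = (∑ y, t y * w a.1 a.2 y) - ∑ y, t y * w b.1 b.2 y := by
      rw [← Finset.sum_sub_distrib]
      exact Finset.sum_congr rfl fun y _ => by simp [mul_sub]
    rw [this]
    exact sub_eq_zero_of_eq hab
  -- moments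
  have key : ∀ m : ℕ, m ≤ J → ∑ ps : X × S, c ps * lam ps ^ m = 0 := by
    intro m hm
    calc ∑ ps : X × S, c ps * lam ps ^ m
        = ∑ ps : X × S, c ps * ∑ yJ : Fin J → Y,
            (∏ j : Fin J, (if (j : ℕ) < m then t (yJ j) else 1)) * ∏ j, w ps.1 ps.2 (yJ j) := by
          refine Finset.sum_congr rfl fun ps _ => ?_
          rw [aux_moment J m hm t (w ps.1 ps.2) (hsum ps.1 ps.2)]
      _ = ∑ yJ : Fin J → Y, ∑ ps : X × S,
            c ps * ((∏ j : Fin J, (if (j : ℕ) < m then t (yJ j) else 1)) * ∏ j, w ps.1 ps.2 (yJ j)) := by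
          simp_rw [Finset.mul_sum]
          exact Finset.sum_comm
      _ = ∑ yJ : Fin J → Y,
            (∏ j : Fin J, (if (j : ℕ) < m then t (yJ j) else 1)) *
              ∑ ps : X × S, c ps * ∏ j, w ps.1 ps.2 (yJ j) := by
          refine Finset.sum_congr rfl fun yJ _ => ?_
          rw [Finset.mul_sum]
          exact Finset.sum_congr rfl fun ps _ => mul_left_comm _ _ _
      _ = 0 := by
          refine Finset.sum_eq_zero fun yJ _ => ?_
          rw [hc yJ, mul_zero]
  -- Vandermonde
  set n := Fintype.card (X × S) with hn
  set e : Fin n ≃ (X × S) := (Fintype.equivFin (X × S)).symm with he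
  have hf : Function.Injective (fun i : Fin n => lam (e i)) := hlam.comp e.injective
  have hv : (fun j : Fin n => c (e j)) = 0 := by
    refine Matrix.eq_zero_of_forall_pow_sum_mul_pow_eq_zero (f := fun i => lam (e i)) hf ?_
    intro i
    have hiJ : (i : ℕ) ≤ J := by have := i.isLt; omega
    have := key (i : ℕ) hiJ
    rw [← this]
    exact Fintype.sum_equiv e _ _ fun j => rfl
  funext ps
  have := congrFun hv (e.symm ps)
  simpa using this



/-- If all rows `w(·|x,s)` of an AVC are pairwise distinct and
`J ≥ |X|·|S|·(|Y|−1)`, then the `J`-fold repetition channel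
`(x,s) ↦ w(·|x,s)^{⊗J}` is injective as a linear map `ℝ^{X×S} → ℝ^{Y^J}`, and the
block-repeated AVC is non-symmetrizable under the maximum error criterion: for all
`x ≠ x'` the convex hulls of `{w(·|x,s)^{⊗J} : s}` and `{w(·|x',s)^{⊗J} : s}` are
disjoint. -/
theorem stmt_13 (X S Y : Type) [Fintype X] [Fintype S] [Fintype Y]
    (w : X → S → Y → ℝ)
    (hpos : ∀ x s y, 0 ≤ w x s y) (hsum : ∀ x s, ∑ y, w x s y = 1)
    (hdist : ∀ (x x' : X) (s s' : S), (x, s) ≠ (x', s') → w x s ≠ w x' s')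
    (J : ℕ) (hJ : Fintype.card X * Fintype.card S * (Fintype.card Y - 1) ≤ J) :
    Function.Injective
      (fun c : X × S → ℝ => fun yJ : Fin J → Y => ∑ ps : X × S, c ps * ∏ j, w ps.1 ps.2 (yJ j))
    ∧ ∀ x x' : X, x ≠ x' →
        convexHull ℝ (Set.range fun s : S => fun yJ : Fin J → Y => ∏ j, w x s (yJ j)) ∩
          convexHull ℝ (Set.range fun s : S => fun yJ : Fin J → Y => ∏ j, w x' s (yJ j)) = ∅ := by
  classical
  constructor
  · intro c c' h
    have hker : (fun ps : X × S => c ps - c' ps) = 0 := by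
      refine aux_kernel w hsum hdist J hJ _ fun yJ => ?_
      have h1 : ∑ ps : X × S, c ps * ∏ j, w ps.1 ps.2 (yJ j)
          = ∑ ps : X × S, c' ps * ∏ j, w ps.1 ps.2 (yJ j) := congrFun h yJ
      simp only [sub_mul, Finset.sum_sub_distrib, h1, sub_self]
    funext ps
    have := congrFun hker ps
    simpa [sub_eq_zero] using this
  · intro x x' hxx'
    rw [Set.eq_empty_iff_forall_notMem]
    rintro q ⟨hq1, hq2⟩
    obtain ⟨a, ha0, ha1, haq⟩ := aux_convex_weights hq1
    obtain ⟨b, hb0, hb1, hbq⟩ := aux_convex_weights hq2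
    set c : X × S → ℝ :=
      fun ps => (if ps.1 = x then a ps.2 else 0) - (if ps.1 = x' then b ps.2 else 0) with hcdef
    have expand : ∀ (x0 : X) (d : S → ℝ) (yJ : Fin J → Y),
        ∑ ps : X × S, (if ps.1 = x0 then d ps.2 else 0) * ∏ j, w ps.1 ps.2 (yJ j)
          = ∑ s, d s * ∏ j, w x0 s (yJ j) := by
      intro x0 d yJ
      rw [Fintype.sum_prod_type]
      have h1 : ∀ x'' : X, ∑ s : S, (if x'' = x0 then d s else 0) * ∏ j, w x'' s (yJ j)
          = if x'' = x0 then ∑ s : S, d s * ∏ j, w x'' s (yJ j) else 0 := by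
        intro x''
        split <;> simp
      simp_rw [h1]
      rw [Finset.sum_ite_eq' Finset.univ x0 (fun x'' => ∑ s : S, d s * ∏ j, w x'' s (yJ j))]
      simp
    have happ : ∀ (x0 : X) (d : S → ℝ) (q0 : (Fin J → Y) → ℝ),
        (∑ s, d s • (fun yJ : Fin J → Y => ∏ j, w x0 s (yJ j))) = q0 →
        ∀ yJ, ∑ s, d s * ∏ j, w x0 s (yJ j) = q0 yJ := by
      intro x0 d q0 hq yJ
      have := congrFun hq yJ
      simpa [Finset.sum_apply] using this
    have hc : ∀ yJ : Fin J → Y, ∑ ps : X × S, c ps * ∏ j, w ps.1 ps.2 (yJ j) = 0 := by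
      intro yJ
      have : ∑ ps : X × S, c ps * ∏ j, w ps.1 ps.2 (yJ j)
          = (∑ ps : X × S, (if ps.1 = x then a ps.2 else 0) * ∏ j, w ps.1 ps.2 (yJ j))
            - ∑ ps : X × S, (if ps.1 = x' then b ps.2 else 0) * ∏ j, w ps.1 ps.2 (yJ j) := by
        rw [← Finset.sum_sub_distrib]
        exact Finset.sum_congr rfl fun ps _ => by rw [hcdef]; ring
      rw [this, expand x a yJ, expand x' b yJ, happ x a q haq yJ, happ x' b q hbq yJ, sub_self]
    have hc0 : c = 0 := aux_kernel w hsum hdist J hJ c hc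
    have h10 : (1 : ℝ) = 0 := by
      calc (1 : ℝ) = ∑ s, a s := ha1.symm
        _ = ∑ s, c (x, s) := by
            refine Finset.sum_congr rfl fun s _ => ?_
            rw [hcdef]
            simp [hxx']
        _ = 0 := by simp [hc0]
    exact one_ne_zero h10
end

section
/- Let W be a non-symmetrizable (maximum error) AVC with finite alphabets. Then there exists a binary quantizer Q : Y → {0,1} (a stochastic map) such that the quantized AVC Q ∘ W is still non-symmetrizable under the maximum error criterion; i.e., for some x ≠ x', conv{Q(w(·|x,s)) : s∈S} ∩ conv{Q(w(·|x',s)) : s∈S} = ∅. -/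
/-! Two disjoint convex hulls of finitely many points are strictly separated by a linear
functional `p ↦ p ⬝ᵥ g`. After rescaling `g` into `[-1, 1]`, the binary quantizer
`Q y = ((1 + g y / C) / 2, (1 - g y / C) / 2)` satisfies `g = C • (Q · 0 - Q · 1)`, so the
separating functional factors through the linear map `p ↦ p ᵥ* Q`. Hence this map sends the
two hulls to disjoint sets, and these images are the hulls of the quantized distributions. -/

open Set Matrix

theorem exists_dotProduct_lt_of_disjoint_s16 {Y : Type*} [Fintype Y] {s t : Set (Y → ℝ)}
    (hs : Convex ℝ s) (hs_compact : IsCompact s) (ht : Convex ℝ t) (ht_closed : IsClosed t)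
    (hst : Disjoint s t) :
    ∃ g : Y → ℝ, ∀ p ∈ s, ∀ q ∈ t, p ⬝ᵥ g < q ⬝ᵥ g := by
  classical
  obtain ⟨f, u, v, hfs, huv, hft⟩ :=
    geometric_hahn_banach_compact_closed hs hs_compact ht ht_closed hst
  have hf : ∀ r : Y → ℝ, f r = r ⬝ᵥ fun y => f (fun j => if y = j then 1 else 0) :=
    fun r => f.toLinearMap.pi_apply_eq_sum_univ r
  refine ⟨fun y => f (fun j => if y = j then 1 else 0), fun p hp q hq => ?_⟩
  rw [← hf, ← hf]
  linarith [hfs p hp, hft q hq]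

theorem exists_stochastic_mulVec_eq {Y : Type*} [Fintype Y] (g : Y → ℝ) :
    ∃ Q : Matrix Y (Fin 2) ℝ, (∀ y b, 0 ≤ Q y b) ∧ (∀ y, ∑ b, Q y b = 1) ∧
      ∃ c : Fin 2 → ℝ, g = Q *ᵥ c := by
  set C := 1 + ∑ y, |g y|
  have hC_pos : 0 < C := by positivity
  have hg_le : ∀ y, |g y| ≤ C := fun y => by
    have := Finset.single_le_sum (f := fun y => |g y|) (fun y _ => abs_nonneg _)
      (Finset.mem_univ y)
    simp only [C]; linarith
  refine ⟨fun y => ![(1 + g y / C) / 2, (1 - g y / C) / 2], fun y b => ?_, fun y => ?_,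
    ![C, -C], ?_⟩
  · have hgC : -1 ≤ g y / C ∧ g y / C ≤ 1 := abs_le.1 (by
      rw [abs_div, abs_of_pos hC_pos, div_le_one hC_pos]; exact hg_le y)
    fin_cases b <;>
      simp only [Fin.zero_eta, Fin.mk_one, Fin.isValue, cons_val_zero, cons_val_one,
        cons_val_fin_one] <;> linarith
  · simp only [Fin.sum_univ_two, Fin.isValue, cons_val_zero, cons_val_one, cons_val_fin_one]
    ring
  · ext y
    simp only [mulVec, dotProduct, Fin.sum_univ_two, Fin.isValue, cons_val_zero, cons_val_one,
      cons_val_fin_one]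
    field_simp
    ring

theorem convexHull_range_vecMul {S Y ι : Type*} [Fintype Y] (v : S → Y → ℝ)
    (Q : Matrix Y ι ℝ) :
    convexHull ℝ (range fun s => v s ᵥ* Q) = (· ᵥ* Q) '' convexHull ℝ (range v) := by
  rw [← Q.coe_vecMulLinear, LinearMap.image_convexHull, ← range_comp]
  rfl

theorem image_vecMul_inter_image_vecMul_eq_empty {Y ι : Type*} [Fintype Y] [Fintype ι]
    {s t : Set (Y → ℝ)} {Q : Matrix Y ι ℝ} {c : ι → ℝ}
    (hst : ∀ p ∈ s, ∀ q ∈ t, p ⬝ᵥ Q *ᵥ c < q ⬝ᵥ Q *ᵥ c) :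
    (· ᵥ* Q) '' s ∩ (· ᵥ* Q) '' t = ∅ := by
  refine eq_empty_iff_forall_notMem.2 ?_
  rintro _ ⟨⟨p, hp, rfl⟩, q, hq, hpq : q ᵥ* Q = p ᵥ* Q⟩
  have := hst p hp q hq
  rw [dotProduct_mulVec, dotProduct_mulVec, hpq] at this
  exact lt_irrefl _ this

theorem stmt_16_general (X S Y : Type) [Fintype S] [Fintype Y]
    (w : X → S → Y → ℝ)
    (hns : ∃ x x' : X, x ≠ x' ∧
      convexHull ℝ (Set.range fun s : S => w x s) ∩
        convexHull ℝ (Set.range fun s : S => w x' s) = ∅) :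
    ∃ Q : Y → Fin 2 → ℝ, (∀ y b, 0 ≤ Q y b) ∧ (∀ y, ∑ b, Q y b = 1) ∧
      ∃ x x' : X, x ≠ x' ∧
        convexHull ℝ (Set.range fun s : S => fun b : Fin 2 => ∑ y, w x s y * Q y b) ∩
          convexHull ℝ (Set.range fun s : S => fun b : Fin 2 => ∑ y, w x' s y * Q y b)
          = ∅ := by
  obtain ⟨x, x', hxx', hdisj⟩ := hns
  have hull_compact (x : X) : IsCompact (convexHull ℝ (range (w x))) :=
    (finite_range _).isCompact_convexHull (𝕜 := ℝ)
  obtain ⟨g, hg⟩ := exists_dotProduct_lt_of_disjoint_s16 (convex_convexHull ℝ _) (hull_compact x)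
    (convex_convexHull ℝ _) (hull_compact x').isClosed (disjoint_iff_inter_eq_empty.2 hdisj)
  obtain ⟨Q, hQ_nonneg, hQ_sum, c, rfl⟩ := exists_stochastic_mulVec_eq g
  refine ⟨Q, hQ_nonneg, hQ_sum, x, x', hxx', ?_⟩
  change convexHull ℝ (range fun s => w x s ᵥ* Q) ∩ convexHull ℝ (range fun s => w x' s ᵥ* Q) = ∅
  rw [convexHull_range_vecMul, convexHull_range_vecMul]
  exact image_vecMul_inter_image_vecMul_eq_empty hg

/-- For a non-symmetrizable (maximum error) AVC there exists a binary stochastic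
quantizer `Q : Y → P({0,1})` such that the quantized AVC is still non-symmetrizable
under the maximum error criterion. -/
theorem stmt_16 (X S Y : Type) [Fintype X] [Fintype S] [Fintype Y]
    (w : X → S → Y → ℝ)
    (hpos : ∀ x s y, 0 ≤ w x s y) (hsum : ∀ x s, ∑ y, w x s y = 1)
    (hns : ∃ x x' : X, x ≠ x' ∧
      convexHull ℝ (Set.range fun s : S => w x s) ∩
        convexHull ℝ (Set.range fun s : S => w x' s) = ∅) :
    ∃ Q : Y → Fin 2 → ℝ, (∀ y b, 0 ≤ Q y b) ∧ (∀ y, ∑ b, Q y b = 1) ∧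
      ∃ x x' : X, x ≠ x' ∧
        convexHull ℝ (Set.range fun s : S => fun b : Fin 2 => ∑ y, w x s y * Q y b) ∩
          convexHull ℝ (Set.range fun s : S => fun b : Fin 2 => ∑ y, w x' s y * Q y b)
          = ∅ :=
  stmt_16_general X S Y w hns
end
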